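/- arXiv:0803.3586 — 3 statements merged into one kernel-verified Lean document; each statement's English description precedes it below -/
import Mathlib

section
/- The group Γ_0(2) is generated by the matrices (1,1;0,1) and (1,0;2,1) together with -I. -/
/-!
Euclid's algorithm inside `Γ₀(2)`. For `g = (a, b; c, d)`, left multiplication by `T ^ m` replaces
`a` by `a + m c` and by `L2 ^ n` replaces `c` by `c + 2 n a`. If `c ≠ 0` is even, first make
`|a| ≤ |c| / 2`; then `a` is odd (as `ad - bc = 1`), so `c` can be moved into `(-|a|, |a|)`, since
an even number is never `± a`. Thus `|c|` drops, and at `c = 0` the matrix is `± T ^ m`.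
-/

open Matrix CongruenceSubgroup ModularGroup MatrixGroups

theorem Int.exists_two_mul_natAbs_add_mul_le (x : ℤ) {y : ℤ} (hy : y ≠ 0) :
    ∃ n : ℤ, 2 * (x + n * y).natAbs ≤ y.natAbs := by
  have hr₀ := Int.emod_nonneg x hy
  have hr₁ := Int.emod_lt x hy
  have hr := Int.emod_def x y
  have hsign := Int.mul_sign_self y
  by_cases hsmall : 2 * (x % y) ≤ y.natAbs
  · exact ⟨-(x / y), by rw [show x + -(x / y) * y = x % y by rw [hr]; ring]; omega⟩
  · refine ⟨-(x / y) - y.sign, ?_⟩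
    rw [show x + (-(x / y) - y.sign) * y = x % y - y * y.sign by rw [hr]; ring, hsign]
    omega

def L2 : SL(2, ℤ) :=
  ⟨!![1, 0; 2, 1], by norm_num [Matrix.det_fin_two_of]⟩

theorem coe_L2_zpow (n : ℤ) : (L2 ^ n).1 = !![1, 0; 2 * n, 1] := by
  have hconj : L2 = S * T ^ (-2 : ℤ) * S⁻¹ := by decide
  rw [hconj, conj_zpow, ← _root_.zpow_mul, Matrix.SpecialLinearGroup.coe_mul,
    Matrix.SpecialLinearGroup.coe_mul, coe_T_zpow, S_inv, Matrix.SpecialLinearGroup.coe_neg, coe_S]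
  simp

theorem T_zpow_mul_apply_zero_zero (m : ℤ) (g : SL(2, ℤ)) :
    (T ^ m * g) 0 0 = g 0 0 + m * g 1 0 := by
  simp [coe_T_zpow, Matrix.mul_apply, Fin.sum_univ_two]

theorem T_zpow_mul_apply_one_zero (m : ℤ) (g : SL(2, ℤ)) : (T ^ m * g) 1 0 = g 1 0 :=
  congrFun (T_pow_mul_apply_one m g) 0

theorem L2_zpow_mul_apply_one_zero (n : ℤ) (g : SL(2, ℤ)) :
    (L2 ^ n * g) 1 0 = g 1 0 + n * (2 * g 0 0) := by
  simp [coe_L2_zpow, Matrix.mul_apply, Fin.sum_univ_two]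
  ring

theorem odd_apply_zero_zero_of_two_dvd {g : SL(2, ℤ)} (hc : 2 ∣ g 1 0) : Odd (g 0 0) := by
  have hdet : g 0 0 * g 1 1 = 1 + g 0 1 * g 1 0 := by
    have := g.2
    rw [Matrix.det_fin_two] at this
    linarith
  have hodd : Odd (g 0 0 * g 1 1) := by
    rw [hdet]
    exact (even_iff_two_dvd.mpr (hc.mul_left _)).one_add
  exact (Int.odd_mul.mp hodd).1

theorem exists_eq_T_zpow_or_eq_neg_T_zpow {g : SL(2, ℤ)} (hc : g 1 0 = 0) :
    ∃ m : ℤ, g = T ^ m ∨ g = -T ^ m := by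
  have had : g 0 0 * g 1 1 = 1 := by
    have := g.2
    rwa [Matrix.det_fin_two, hc, mul_zero, sub_zero] at this
  rcases Int.eq_one_or_neg_one_of_mul_eq_one' had with ⟨ha, hd⟩ | ⟨ha, hd⟩
  · refine ⟨g 0 1, Or.inl ?_⟩
    ext i j
    fin_cases i <;> fin_cases j <;> simp [coe_T_zpow, ha, hd, hc]
  · refine ⟨-g 0 1, Or.inr ?_⟩
    ext i j
    fin_cases i <;> fin_cases j <;> simp [coe_T_zpow, ha, hd, hc]

theorem exists_natAbs_apply_one_zero_lt {g : SL(2, ℤ)} (hc : 2 ∣ g 1 0) (hc₀ : g 1 0 ≠ 0) :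
    ∃ m n : ℤ, 2 ∣ (L2 ^ n * T ^ m * g) 1 0 ∧
      ((L2 ^ n * T ^ m * g) 1 0).natAbs < (g 1 0).natAbs := by
  obtain ⟨m, hm⟩ := Int.exists_two_mul_natAbs_add_mul_le (g 0 0) hc₀
  set g' := T ^ m * g
  have hc' : g' 1 0 = g 1 0 := T_zpow_mul_apply_one_zero m g
  have ha' : g' 0 0 = g 0 0 + m * g 1 0 := T_zpow_mul_apply_zero_zero m g
  have hodd : Odd (g' 0 0) := odd_apply_zero_zero_of_two_dvd (hc' ▸ hc)
  obtain ⟨n, hn⟩ := Int.exists_two_mul_natAbs_add_mul_le (g 1 0)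
    (y := 2 * g' 0 0) (by obtain ⟨k, hk⟩ := hodd; omega)
  have hc'' : (L2 ^ n * g') 1 0 = g 1 0 + n * (2 * g' 0 0) := by
    rw [L2_zpow_mul_apply_one_zero, hc']
  have hodd' : Odd (g' 0 0).natAbs := Int.natAbs_odd.mpr hodd
  refine ⟨m, n, ?_, ?_⟩ <;> rw [mul_assoc, hc'']
  · exact dvd_add hc ⟨n * g' 0 0, by ring⟩
  · obtain ⟨k, hk⟩ := hodd'
    omega

theorem mem_closure_of_two_dvd {g : SL(2, ℤ)} (hc : 2 ∣ g 1 0) :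
    g ∈ Subgroup.closure {T, L2, -1} := by
  have hT : T ∈ Subgroup.closure {T, L2, -1} := Subgroup.subset_closure (by simp)
  have hL2 : L2 ∈ Subgroup.closure {T, L2, -1} := Subgroup.subset_closure (by simp)
  have hneg : -1 ∈ Subgroup.closure {T, L2, -1} := Subgroup.subset_closure (by simp)
  induction hk : (g 1 0).natAbs using Nat.strong_induction_on generalizing g with
  | _ k ih =>
    by_cases hc₀ : g 1 0 = 0
    · obtain ⟨m, rfl | rfl⟩ := exists_eq_T_zpow_or_eq_neg_T_zpow hc₀
      · exact zpow_mem hT m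
      · simpa using mul_mem hneg (zpow_mem hT m)
    · obtain ⟨m, n, hc', hlt⟩ := exists_natAbs_apply_one_zero_lt hc hc₀
      have hmem := ih _ (hk ▸ hlt) hc' rfl
      rw [show g = (L2 ^ n * T ^ m)⁻¹ * (L2 ^ n * T ^ m * g) by group]
      exact mul_mem (inv_mem (mul_mem (zpow_mem hL2 n) (zpow_mem hT m))) hmem

theorem closure_le_Gamma0_two : Subgroup.closure {T, L2, -1} ≤ Gamma0 2 := by
  simp only [Subgroup.closure_le, Set.insert_subset_iff, Set.singleton_subset_iff,
    SetLike.mem_coe, Gamma0_mem]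
  decide

/-- `Γ₀(2)` is generated by `(1,1;0,1)`, `(1,0;2,1)` and `-I`. -/
theorem Gamma0_two_generators :
    Gamma0 2 = Subgroup.closure
      ({⟨!![1, 1; 0, 1], by norm_num [Matrix.det_fin_two_of]⟩,
        ⟨!![1, 0; 2, 1], by norm_num [Matrix.det_fin_two_of]⟩,
        -1} : Set (Matrix.SpecialLinearGroup (Fin 2) ℤ)) := by
  change Gamma0 2 = Subgroup.closure {T, L2, -1}
  refine le_antisymm (fun g hg => mem_closure_of_two_dvd ?_) closure_le_Gamma0_two
  exact (ZMod.intCast_zmod_eq_zero_iff_dvd _ 2).mp (Gamma0_mem.mp hg)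
end

section
/- The group Γ_0(4) is generated by -I, (1,1;0,1), and (1,0;4,1). -/
/-!
Every `A = (a b; c d)` in `Γ₀(4)` has `a` odd. Multiplying on the left by `T^e = (1 e; 0 1)`
replaces `a` by `a + e c`, and by `(1 0; 4e 1)` replaces `c` by `c + 4e a`; both stay in `Γ₀(4)`.
If `0 < |c| < 2|a|`, a step of the first kind shrinks `|a|`; otherwise `|c| > 2|a|` and a step of
the second kind shrinks `|c|`. Descending on `|a| + |c|` ends at `c = 0`, where `A = ±T^b`.
-/

open Matrix CongruenceSubgroup
open scoped MatrixGroups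

namespace Matrix.SpecialLinearGroup

variable {ι R : Type*} [Fintype ι] [DecidableEq ι] [CommRing R]

lemma transvection_zsmul {i j : ι} (hij : i ≠ j) (n : ℤ) (b : R) :
    transvection hij (n • b) = transvection hij b ^ n := by
  induction n using Int.induction_on with
  | zero => simp [transvection_coeff_zero]
  | succ n ih => rw [add_smul, one_smul, transvection_add, ih, _root_.zpow_add_one]
  | pred n ih =>
    rw [sub_smul, one_smul, sub_eq_add_neg, transvection_add, ih, ← transvection_inv,
      _root_.zpow_sub_one]

lemma transvection_mul_apply_same {i j : ι} (hij : i ≠ j) (b : R) (A : SpecialLinearGroup ι R)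
    (k : ι) : (transvection hij b * A) i k = A i k + b * A j k :=
  Matrix.transvection_mul_apply_same i j k b A

lemma transvection_mul_apply_of_ne {i j : ι} (hij : i ≠ j) (b : R) (A : SpecialLinearGroup ι R)
    {a : ι} (ha : a ≠ i) (k : ι) : (transvection hij b * A) a k = A a k :=
  Matrix.transvection_mul_apply_of_ne i j a k ha b A

end Matrix.SpecialLinearGroup

-- The tie `|c| = 2|a|` cannot occur since `4 ∣ c` and `a` is odd; this is why the level is `4`.
lemma Int.exists_natAbs_add_mul_lt_of_odd_of_four_dvd {a c : ℤ} (ha : Odd a) (hc : 4 ∣ c)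
    (hc0 : c ≠ 0) :
    (∃ e : ℤ, (a + e * c).natAbs < a.natAbs) ∨ ∃ e : ℤ, (c + 4 * e * a).natAbs < c.natAbs := by
  obtain ⟨k, rfl⟩ := ha
  obtain ⟨m, rfl⟩ := hc
  have : (2 * k + 1 + 4 * m).natAbs < (2 * k + 1).natAbs ∨
      (2 * k + 1 - 4 * m).natAbs < (2 * k + 1).natAbs ∨
      (4 * m + 4 * (2 * k + 1)).natAbs < (4 * m).natAbs ∨
      (4 * m - 4 * (2 * k + 1)).natAbs < (4 * m).natAbs := by
    omega
  rcases this with h | h | h | h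
  · exact .inl ⟨1, by simpa using h⟩
  · exact .inl ⟨-1, by simpa [← sub_eq_add_neg] using h⟩
  · exact .inr ⟨1, by simpa using h⟩
  · exact .inr ⟨-1, by simpa [← sub_eq_add_neg] using h⟩

namespace ModularGroup

lemma odd_apply_zero_zero_of_two_dvd {A : SL(2, ℤ)} (hA : 2 ∣ A 1 0) : Odd (A 0 0) := by
  have hdet := A.det_coe
  rw [det_fin_two] at hdet
  rw [← Int.not_even_iff_odd, even_iff_two_dvd]
  intro ha
  have : (2 : ℤ) ∣ 1 := hdet ▸ (ha.mul_right _).sub (hA.mul_left _)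
  norm_num at this

lemma exists_eq_transvection_or_neg_of_apply_one_zero_eq_zero {A : SL(2, ℤ)} (hc : A 1 0 = 0) :
    ∃ b, A = SpecialLinearGroup.transvection zero_ne_one b ∨
      A = -SpecialLinearGroup.transvection zero_ne_one b := by
  have hdet := A.det_coe
  rw [det_fin_two, hc, mul_zero, sub_zero] at hdet
  rcases Int.eq_one_or_neg_one_of_mul_eq_one' hdet with ⟨ha, hd⟩ | ⟨ha, hd⟩
  · refine ⟨A 0 1, .inl ?_⟩
    ext i j; fin_cases i <;> fin_cases j <;> simp [SpecialLinearGroup.transvection_coe, ha, hc, hd]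
  · refine ⟨-A 0 1, .inr ?_⟩
    ext i j; fin_cases i <;> fin_cases j <;> simp [SpecialLinearGroup.transvection_coe, ha, hc, hd]

end ModularGroup

namespace CongruenceSubgroup

lemma Gamma0_mem_iff_dvd {N : ℕ} {A : SL(2, ℤ)} : A ∈ Gamma0 N ↔ (N : ℤ) ∣ A 1 0 := by
  rw [Gamma0_mem, ZMod.intCast_zmod_eq_zero_iff_dvd]

lemma transvection_zero_one_mem_Gamma0 (N : ℕ) (b : ℤ) :
    SpecialLinearGroup.transvection zero_ne_one b ∈ Gamma0 N := by
  simp [SpecialLinearGroup.transvection_coe]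

lemma transvection_one_zero_mem_Gamma0 (N : ℕ) (b : ℤ) :
    SpecialLinearGroup.transvection one_ne_zero (N * b) ∈ Gamma0 N := by
  simp [SpecialLinearGroup.transvection_coe]

theorem Gamma0_four_le_of_transvection_mem {H : Subgroup SL(2, ℤ)}
    (hT : SpecialLinearGroup.transvection zero_ne_one 1 ∈ H)
    (hL : SpecialLinearGroup.transvection one_ne_zero 4 ∈ H) (hneg : -1 ∈ H) :
    Gamma0 4 ≤ H := by
  have hT' (e : ℤ) : SpecialLinearGroup.transvection zero_ne_one e ∈ H := by
    simpa [← SpecialLinearGroup.transvection_zsmul] using H.zpow_mem hT e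
  have hL' (e : ℤ) : SpecialLinearGroup.transvection one_ne_zero (4 * e) ∈ H := by
    simpa [← SpecialLinearGroup.transvection_zsmul, mul_comm] using H.zpow_mem hL e
  intro A hA
  induction hn : (A 0 0).natAbs + (A 1 0).natAbs using Nat.strong_induction_on generalizing A with
  | _ n ih =>
  by_cases hc0 : A 1 0 = 0
  · obtain ⟨b, rfl | rfl⟩ :=
      ModularGroup.exists_eq_transvection_or_neg_of_apply_one_zero_eq_zero hc0
    · exact hT' b
    · simpa using H.mul_mem hneg (hT' b)
  have hc : 4 ∣ A 1 0 := by exact_mod_cast Gamma0_mem_iff_dvd.mp hA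
  have ha : Odd (A 0 0) :=
    ModularGroup.odd_apply_zero_zero_of_two_dvd ((by norm_num : (2 : ℤ) ∣ 4).trans hc)
  rcases Int.exists_natAbs_add_mul_lt_of_odd_of_four_dvd ha hc hc0 with ⟨e, he⟩ | ⟨e, he⟩
  · have hA' := (Gamma0 4).mul_mem (transvection_zero_one_mem_Gamma0 4 e) hA
    refine (H.mul_mem_cancel_left (hT' e)).mp (ih _ ?_ hA' rfl)
    rw [SpecialLinearGroup.transvection_mul_apply_same,
      SpecialLinearGroup.transvection_mul_apply_of_ne _ _ _ one_ne_zero]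
    omega
  · have hA' := (Gamma0 4).mul_mem (transvection_one_zero_mem_Gamma0 4 e) hA
    refine (H.mul_mem_cancel_left (hL' e)).mp (ih _ ?_ hA' rfl)
    rw [SpecialLinearGroup.transvection_mul_apply_same,
      SpecialLinearGroup.transvection_mul_apply_of_ne _ _ _ zero_ne_one]
    omega

end CongruenceSubgroup

/-- `Γ₀(4)` is generated by `(1,1;0,1)`, `(1,0;2,1)` and `-I`. -/
theorem Gamma0_four_generators :
    Gamma0 4 = Subgroup.closure
      ({⟨!![1, 1; 0, 1], by norm_num [Matrix.det_fin_two_of]⟩,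
        ⟨!![1, 0; 4, 1], by norm_num [Matrix.det_fin_two_of]⟩,
        -1} : Set (Matrix.SpecialLinearGroup (Fin 2) ℤ)) := by
  have hT : (⟨!![1, 1; 0, 1], by norm_num [Matrix.det_fin_two_of]⟩ : SL(2, ℤ)) =
      SpecialLinearGroup.transvection zero_ne_one 1 := by
    ext i j; fin_cases i <;> fin_cases j <;> rfl
  have hL : (⟨!![1, 0; 4, 1], by norm_num [Matrix.det_fin_two_of]⟩ : SL(2, ℤ)) =
      SpecialLinearGroup.transvection one_ne_zero 4 := by
    ext i j; fin_cases i <;> fin_cases j <;> rfl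
  rw [hT, hL]
  refine le_antisymm (Gamma0_four_le_of_transvection_mem (Subgroup.subset_closure (by simp))
    (Subgroup.subset_closure (by simp)) (Subgroup.subset_closure (by simp))) ?_
  rw [Subgroup.closure_le]
  rintro A (rfl | rfl | rfl)
  · exact transvection_zero_one_mem_Gamma0 4 1
  · simpa using transvection_one_zero_mem_Gamma0 4 1
  · simp [Gamma0_mem]
end

section
/- Conjugating Γ_0(2) by the translation T_{1/2} = (1, 1/2; 0, 1) yields a group containing the subgroup generated by (1,1;0,1) and W_4 = (0,-1/2; 2,0); in particular T_{1/2}^{-1} (1,0;2,1) T_{1/2} and W_4 generate the same subgroup of PSL_2(ℝ) together with translations, realizing Γ_0^*(4) = T_{1/2}^{-1} Γ_0(2) T_{1/2}. -/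
open Matrix

abbrev SL2R := Matrix.SpecialLinearGroup (Fin 2) ℝ

/-- The translation `T = (1,1;0,1)` in `SL(2,ℝ)`. -/
noncomputable def T1 : SL2R := ⟨!![1, 1; 0, 1], by norm_num [Matrix.det_fin_two_of]⟩

/-- The Fricke involution `W₄ = (0,-1/2;2,0)`. -/
noncomputable def W4 : SL2R := ⟨!![0, -1/2; 2, 0], by norm_num [Matrix.det_fin_two_of]⟩

/-- The half-translation `T_{1/2} = (1,1/2;0,1)`. -/
noncomputable def Thalf : SL2R := ⟨!![1, 1/2; 0, 1], by norm_num [Matrix.det_fin_two_of]⟩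

/-- `Γ₀(2)` viewed inside `SL(2,ℝ)`: integer entries with even lower-left entry. -/
def Gamma0TwoR : Set SL2R :=
  {g | (∀ i j, ∃ n : ℤ, g.1 i j = (n : ℝ)) ∧ ∃ m : ℤ, g.1 1 0 = 2 * (m : ℝ)}

/-!
Γ₀(2) is generated by `T = (1,1;0,1)`, `U = (1,0;2,1)` and `-1`: for `(a, c)` the first column
of an element of Γ₀(2), `a` is odd, so reducing `a` modulo `c` with a power of `T` and then `c`
modulo `2a` with a power of `U` strictly lowers `|c|`, until the matrix is upper triangular,
i.e. `±Tⁿ`. Conjugation by `T_{1/2}` fixes `T` and `-1` and sends `U` to `W₄ T`, so it carries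
Γ₀(2) onto the group generated by `T`, `W₄` and `-1`.
-/

open MatrixGroups ModularGroup CongruenceSubgroup Subgroup

def U : SL(2, ℤ) := ⟨!![1, 0; 2, 1], by simp [Matrix.det_fin_two_of]⟩

theorem coe_U_zpow (n : ℤ) :
    ((U ^ n : SL(2, ℤ)) : Matrix (Fin 2) (Fin 2) ℤ) = !![1, 0; 2 * n, 1] := by
  induction n with
  | zero => rw [zpow_zero, Matrix.SpecialLinearGroup.coe_one, Matrix.one_fin_two]; simp
  | succ n h =>
    rw [_root_.zpow_add, zpow_one, Matrix.SpecialLinearGroup.coe_mul, h]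
    simp only [U, Matrix.mul_fin_two]
    congrm !![?_, ?_; ?_, ?_] <;> push_cast <;> ring
  | pred n h =>
    rw [_root_.zpow_sub, zpow_one, Matrix.SpecialLinearGroup.coe_mul, h,
      Matrix.SpecialLinearGroup.coe_inv]
    simp only [U, Matrix.adjugate_fin_two_of, Matrix.mul_fin_two]
    congrm !![?_, ?_; ?_, ?_] <;> ring

theorem U_zpow_mul_T_zpow_mul_apply_one_zero (k m : ℤ) (g : SL(2, ℤ)) :
    (U ^ k * T ^ m * g) 1 0 = 2 * k * (g 0 0 + m * g 1 0) + g 1 0 := by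
  simp only [Matrix.SpecialLinearGroup.coe_mul, coe_U_zpow, coe_T_zpow, Matrix.mul_apply,
    Fin.sum_univ_two, of_apply, cons_val', cons_val_zero, cons_val_one, cons_val_fin_one]
  ring

theorem exists_abs_two_mul_add_lt {a c : ℤ} (hc : c ≠ 0) (hc2 : Even c) (ha : Odd a) :
    ∃ m k : ℤ, |2 * k * (a + m * c) + c| < |c| := by
  set r := a % c with hr
  have hr_eq : a + -(a / c) * c = r := by rw [hr, Int.emod_def]; ring
  have hr_odd : Odd r := by
    rw [← hr_eq]; exact ha.add_even (hc2.mul_left _)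
  have hr_pos : 0 < r := lt_of_le_of_ne (Int.emod_nonneg a hc) (fun h => by simp [← h] at hr_odd)
  have hr_lt : r < |c| := Int.emod_lt_abs a hc
  -- `c + 2 k r` is the representative of `c` modulo `2 r` in `[-r, r)`
  refine ⟨-(a / c), -((c + r) / (2 * r)), ?_⟩
  have hs := Int.emod_def (c + r) (2 * r)
  have hs0 := Int.emod_nonneg (c + r) (by omega : 2 * r ≠ 0)
  have hs1 := Int.emod_lt_of_pos (c + r) (by omega : 0 < 2 * r)
  rw [hr_eq, abs_lt]
  constructor <;> nlinarith [abs_nonneg c]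

theorem mem_of_apply_one_zero_eq_zero {H : Subgroup SL(2, ℤ)} (hT : T ∈ H) (hneg : -1 ∈ H)
    {g : SL(2, ℤ)} (hc : g 1 0 = 0) : g ∈ H := by
  have had : g 0 0 * g 1 1 = 1 := by
    have hdet := g.det_coe
    rwa [Matrix.det_fin_two, hc, mul_zero, sub_zero] at hdet
  rcases Int.eq_one_or_neg_one_of_mul_eq_one' had with ⟨ha, hd⟩ | ⟨ha, hd⟩
  · have hg : g = T ^ g 0 1 := by
      ext i j; fin_cases i <;> fin_cases j <;> simp [ha, hc, hd, coe_T_zpow]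
    exact hg ▸ zpow_mem hT _
  · have hg : g = -1 * T ^ (-g 0 1) := by
      ext i j; fin_cases i <;> fin_cases j <;> simp [ha, hc, hd, coe_T_zpow]
    exact hg ▸ mul_mem hneg (zpow_mem hT _)

theorem odd_apply_zero_zero_of_even_apply_one_zero {g : SL(2, ℤ)} (hc : Even (g 1 0)) :
    Odd (g 0 0) := by
  have hdet : g 0 0 * g 1 1 = 1 + g 0 1 * g 1 0 := by
    have := g.det_coe
    rw [Matrix.det_fin_two] at this
    linarith
  have hodd : Odd (g 0 0 * g 1 1) := hdet ▸ odd_one.add_even (hc.mul_left _)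
  exact (Int.odd_mul.mp hodd).1

theorem Gamma0_two_le_of_mem {H : Subgroup SL(2, ℤ)} (hT : T ∈ H) (hU : U ∈ H) (hneg : -1 ∈ H) :
    Gamma0 2 ≤ H := by
  have hTU : ∀ k m : ℤ, U ^ k * T ^ m ∈ Gamma0 2 := fun k m =>
    mul_mem (zpow_mem (Gamma0_mem.mpr rfl) k) (zpow_mem (Gamma0_mem.mpr rfl) m)
  intro g hg
  induction hn : (g 1 0).natAbs using Nat.strong_induction_on generalizing g with
  | _ n ih =>
  by_cases hc : g 1 0 = 0
  · exact mem_of_apply_one_zero_eq_zero hT hneg hc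
  have hc2 : Even (g 1 0) := by
    rw [Gamma0_mem, ZMod.intCast_zmod_eq_zero_iff_dvd] at hg
    exact even_iff_two_dvd.mpr (by exact_mod_cast hg)
  obtain ⟨m, k, hlt⟩ :=
    exists_abs_two_mul_add_lt hc hc2 (odd_apply_zero_zero_of_even_apply_one_zero hc2)
  have hg' : U ^ k * T ^ m * g ∈ H := by
    refine ih _ ?_ (mul_mem (hTU k m) hg) rfl
    rw [← hn, U_zpow_mul_T_zpow_mul_apply_one_zero]
    zify
    exact hlt
  have hg_eq : g = (U ^ k * T ^ m)⁻¹ * (U ^ k * T ^ m * g) := by group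
  rw [hg_eq]
  exact mul_mem (inv_mem (mul_mem (zpow_mem hU k) (zpow_mem hT m))) hg'

noncomputable def conjThalf : SL(2, ℤ) →* SL2R :=
  (MulAut.conj Thalf⁻¹).toMonoidHom.comp (Matrix.SpecialLinearGroup.map (Int.castRingHom ℝ))

theorem conjThalf_apply (γ : SL(2, ℤ)) :
    conjThalf γ = Thalf⁻¹ * Matrix.SpecialLinearGroup.map (Int.castRingHom ℝ) γ * Thalf := by
  simp [conjThalf]

theorem coe_conjThalf (γ : SL(2, ℤ)) : (conjThalf γ : Matrix (Fin 2) (Fin 2) ℝ) =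
    let a : ℝ := γ 0 0; let b : ℝ := γ 0 1; let c : ℝ := γ 1 0; let d : ℝ := γ 1 1
    !![a - c / 2, (a - c / 2) / 2 + b - d / 2; c, c / 2 + d] := by
  rw [conjThalf_apply, Matrix.SpecialLinearGroup.coe_mul, Matrix.SpecialLinearGroup.coe_mul,
    Matrix.SpecialLinearGroup.coe_inv, Matrix.SpecialLinearGroup.map_apply_coe]
  ext i j
  fin_cases i <;> fin_cases j <;>
    simp only [Thalf, adjugate_fin_two_of, RingHom.mapMatrix_apply, map_apply, Matrix.mul_apply,
      Fin.sum_univ_two, of_apply, cons_val', cons_val_zero, cons_val_one, cons_val_fin_one,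
      Int.coe_castRingHom, Fin.zero_eta, Fin.mk_one] <;> ring

theorem conjThalf_T : conjThalf T = T1 := by
  apply Subtype.ext
  rw [coe_conjThalf]
  norm_num [T1]

theorem conjThalf_U : conjThalf U = W4 * T1 := by
  apply Subtype.ext
  rw [coe_conjThalf, Matrix.SpecialLinearGroup.coe_mul]
  norm_num [U, W4, T1, Matrix.mul_fin_two]

theorem conjThalf_neg_one : conjThalf (-1) = -1 := by
  simp [conjThalf_apply]

theorem mem_Gamma0TwoR_iff {g : SL2R} :
    g ∈ Gamma0TwoR ↔ ∃ γ ∈ Gamma0 2, Matrix.SpecialLinearGroup.map (Int.castRingHom ℝ) γ = g := by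
  constructor
  · rintro ⟨hint, m, hm⟩
    choose n hn using hint
    have hmap : (Matrix.of n).map (fun x : ℤ => (x : ℝ)) = g := by
      ext i j
      exact (hn i j).symm
    have hdet : (Matrix.of n).det = 1 := by
      have h : ((Matrix.of n).det : ℝ) = 1 := by rw [Int.cast_det, hmap, g.det_coe]
      exact_mod_cast h
    refine ⟨(⟨Matrix.of n, hdet⟩ : SL(2, ℤ)), ?_, Subtype.ext hmap⟩
    have hn10 : n 1 0 = 2 * m := by exact_mod_cast (hn 1 0).symm.trans hm
    exact Gamma0_mem.mpr ((ZMod.intCast_zmod_eq_zero_iff_dvd _ 2).mpr ⟨m, hn10⟩)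
  · rintro ⟨γ, hγ, rfl⟩
    rw [Gamma0_mem, ZMod.intCast_zmod_eq_zero_iff_dvd] at hγ
    obtain ⟨m, hm⟩ := hγ
    exact ⟨fun i j => ⟨γ i j, rfl⟩, m, by simp [hm]⟩

theorem setOf_conj_mem_Gamma0TwoR :
    {x : SL2R | ∃ g ∈ Gamma0TwoR, x = Thalf⁻¹ * g * Thalf} = conjThalf '' Gamma0 2 := by
  ext x
  constructor
  · rintro ⟨g, hg, rfl⟩
    obtain ⟨γ, hγ, rfl⟩ := mem_Gamma0TwoR_iff.mp hg
    exact ⟨γ, hγ, conjThalf_apply γ⟩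
  · rintro ⟨γ, hγ, rfl⟩
    exact ⟨_, mem_Gamma0TwoR_iff.mpr ⟨γ, hγ, rfl⟩, conjThalf_apply γ⟩

/-- `Γ₀^*(4) = T_{1/2}⁻¹ Γ₀(2) T_{1/2}`: the subgroup of `SL(2,ℝ)` generated by
`(1,1;0,1)`, `W₄` and `-I` equals the group generated by the conjugate
`T_{1/2}⁻¹ Γ₀(2) T_{1/2}`. -/
theorem Gamma0star_four_eq_conj_Gamma0_two :
    Subgroup.closure ({T1, W4, -1} : Set SL2R) =
      Subgroup.closure {x : SL2R | ∃ g ∈ Gamma0TwoR, x = Thalf⁻¹ * g * Thalf} := by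
  rw [setOf_conj_mem_Gamma0TwoR, ← coe_map, closure_eq]
  apply le_antisymm
  · rw [closure_le]
    rintro x (rfl | rfl | rfl)
    · exact ⟨T, Gamma0_mem.mpr rfl, conjThalf_T⟩
    · refine ⟨U * T⁻¹, mul_mem (Gamma0_mem.mpr rfl) (inv_mem (Gamma0_mem.mpr rfl)), ?_⟩
      rw [map_mul, map_inv, conjThalf_U, conjThalf_T, mul_inv_cancel_right]
    · exact ⟨-1, Gamma0_mem.mpr rfl, conjThalf_neg_one⟩
  · rw [map_le_iff_le_comap]
    apply Gamma0_two_le_of_mem <;> rw [mem_comap]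
    · rw [conjThalf_T]
      exact subset_closure (by simp)
    · rw [conjThalf_U]
      exact mul_mem (subset_closure (by simp)) (subset_closure (by simp))
    · rw [conjThalf_neg_one]
      exact subset_closure (by simp)
end
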